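/- arXiv:2510.03754 — 2 statements merged into one kernel-verified Lean document; each statement's English description precedes it below -/
import Mathlib

section
/- Let G be a profinite group which is finite-by-pronilpotent, i.e. G has a finite normal subgroup N such that G/N is pronilpotent. Then G is pronilpotent-by-finite: G has an open (hence closed, finite-index) pronilpotent normal subgroup. -/
/-!  Basic notions for profinite groups.

A profinite group is modelled as a compact Hausdorff totally disconnected
topological group, via the instance assumptions
`[Group G] [TopologicalSpace G] [TopologicalGroup G] [CompactSpace G]
[T2Space G] [TotallyDisconnectedSpace G]`. -/

open scoped commutatorElement

/-- The set of primes dividing the order of some finite continuous quotient of `K`: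
`p ∈ primesOf K` iff `p` is prime and divides the (finite) index of some open normal
subgroup of `K`. -/
def primesOf (K : Type*) [Group K] [TopologicalSpace K] : Set ℕ :=
  {p | p.Prime ∧ ∃ N : Subgroup K, N.Normal ∧ IsOpen (N : Set K) ∧ N.index ≠ 0 ∧ p ∣ N.index}

/-- The closed subgroup topologically generated by `x`. -/
def closedGen {G : Type*} [Group G] [TopologicalSpace G] [IsTopologicalGroup G] (x : G) :
    Subgroup G :=
  (Subgroup.zpowers x).topologicalClosure

/-- `x` and `y` have coprime orders: `π(⟨x⟩) ∩ π(⟨y⟩) = ∅`. -/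
def CoprimeOrders {G : Type*} [Group G] [TopologicalSpace G] [IsTopologicalGroup G] (x y : G) :
    Prop :=
  primesOf ↥(closedGen x) ∩ primesOf ↥(closedGen y) = ∅

/-- `g` is a coprime commutator: `g = [x,y]` with `x, y` of coprime orders. -/
def IsCoprimeCommutator {G : Type*} [Group G] [TopologicalSpace G] [IsTopologicalGroup G]
    (g : G) : Prop :=
  ∃ x y : G, CoprimeOrders x y ∧ g = ⁅x, y⁆

/-- A topological group is procyclic if it is topologically generated by a single element. -/
def IsProcyclic (K : Type*) [Group K] [TopologicalSpace K] : Prop :=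
  ∃ g : K, closure ((Subgroup.zpowers g : Subgroup K) : Set K) = Set.univ

/-- A subgroup of a topological group is procyclic if it is topologically generated by a
single element. -/
def IsProcyclicSubgroup {G : Type*} [Group G] [TopologicalSpace G] (H : Subgroup G) : Prop :=
  ∃ g ∈ H, closure ((Subgroup.zpowers g : Subgroup G) : Set G) = (H : Set G)

/-- The pronilpotent residual `γ∞(G)`: the intersection of the terms of the lower central
series of `G` (each term taken as the corresponding closed subgroup). -/
def pronilpotentResidual (G : Type*) [Group G] [TopologicalSpace G] [IsTopologicalGroup G] :
    Subgroup G :=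
  ⨅ n : ℕ, ((⊤ : Subgroup G).lowerCentralSeries n).topologicalClosure

/-- A profinite group is pronilpotent iff its pronilpotent residual is trivial. -/
def IsPronilpotent (K : Type*) [Group K] [TopologicalSpace K] [IsTopologicalGroup K] : Prop :=
  pronilpotentResidual K = ⊥

/-- The quotient `K ⧸ N` is procyclic. -/
def QuotientIsProcyclic {K : Type*} [Group K] [TopologicalSpace K] (N : Subgroup K)
    (hN : N.Normal) : Prop :=
  letI := hN
  IsProcyclic (K ⧸ N)

/-- `K` is finite-by-procyclic: it has a finite normal subgroup with procyclic quotient. -/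
def FiniteByProcyclic (K : Type*) [Group K] [TopologicalSpace K] : Prop :=
  ∃ (N : Subgroup K) (hN : N.Normal), Finite N ∧ QuotientIsProcyclic N hN

/-- The quotient `K ⧸ N` is pronilpotent. -/
def QuotientIsPronilpotent {K : Type*} [Group K] [TopologicalSpace K] [IsTopologicalGroup K]
    (N : Subgroup K) (hN : N.Normal) : Prop :=
  letI := hN
  IsPronilpotent (K ⧸ N)

/-- The closed subgroup `[S,T]` generated by the commutators `⁅s,t⁆`, `s ∈ S`, `t ∈ T`. -/
def commClosure {G : Type*} [Group G] [TopologicalSpace G] [IsTopologicalGroup G]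
    (S T : Set G) : Subgroup G :=
  (Subgroup.closure {z : G | ∃ s ∈ S, ∃ t ∈ T, z = ⁅s, t⁆}).topologicalClosure

/-! The centralizer `C` of the finite normal subgroup `N` is open, since conjugation by elements
near `1` cannot move a point of the finite discrete set `N`, and normal. The pronilpotent
residual of `C` maps to the trivial residual of `G ⧸ N`, so it lies in `N` and is therefore
central in `C`. A profinite group with central residual `D` is pronilpotent: for an open normal
subgroup `U`, compactness gives `closure γₙ ⊆ D * U` for some `n`, and since `D` is central,
`γₙ₊₁ = ⁅γₙ, ⊤⁆ ≤ U`; hence `D ≤ U` for every such `U`, i.e. `D = ⊥`. -/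

open scoped Pointwise

theorem Subgroup.isOpen_centralizer_of_finite {G : Type*} [Group G] [TopologicalSpace G]
    [IsTopologicalGroup G] [T1Space G] (N : Subgroup G) [N.Normal] [Finite N] :
    IsOpen (centralizer (N : Set G) : Set G) := by
  have hconj : (centralizer (N : Set G) : Set G) =
      ⋂ n ∈ (N : Set G), (fun g => g * n * g⁻¹) ⁻¹' ((N : Set G) \ {n})ᶜ := by
    ext g
    simp only [SetLike.mem_coe, mem_centralizer_iff, Set.mem_iInter, Set.mem_preimage,
      Set.mem_compl_iff, Set.mem_sdiff, Set.mem_singleton_iff, not_and, not_not]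
    refine forall₂_congr fun n hn => ?_
    rw [mul_inv_eq_iff_eq_mul, eq_comm]
    exact ⟨fun h _ => h, fun h => h (Normal.conj_mem ‹_› n hn g)⟩
  rw [hconj]
  exact (Set.toFinite _).isOpen_biInter fun n _ =>
    ((Set.toFinite _).isClosed.isOpen_compl).preimage (by fun_prop)

section Residual

variable {K : Type*} [Group K] [TopologicalSpace K] [IsTopologicalGroup K]

theorem mem_pronilpotentResidual_iff {x : K} :
    x ∈ pronilpotentResidual K ↔
      ∀ n, x ∈ closure ((⊤ : Subgroup K).lowerCentralSeries n : Set K) :=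
  Subgroup.mem_iInf

theorem map_pronilpotentResidual_le {Q : Type*} [Group Q] [TopologicalSpace Q]
    [IsTopologicalGroup Q] (f : K →* Q) (hf : Continuous f) :
    (pronilpotentResidual K).map f ≤ pronilpotentResidual Q := by
  rintro _ ⟨x, hx, rfl⟩
  rw [SetLike.mem_coe, mem_pronilpotentResidual_iff] at hx
  refine mem_pronilpotentResidual_iff.2 fun n => map_mem_closure hf (hx n) fun y hy => ?_
  have hmap : ((⊤ : Subgroup K).lowerCentralSeries n).map f ≤
      (⊤ : Subgroup Q).lowerCentralSeries n := by
    rw [Subgroup.map_lowerCentralSeries]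
    exact Subgroup.lowerCentralSeries_mono n le_top
  exact hmap ⟨y, hy, rfl⟩

theorem pronilpotentResidual_le_ker {Q : Type*} [Group Q] [TopologicalSpace Q]
    [IsTopologicalGroup Q] (f : K →* Q) (hf : Continuous f) (hQ : IsPronilpotent Q) :
    pronilpotentResidual K ≤ f.ker :=
  Subgroup.map_le_iff_le_comap.1 ((map_pronilpotentResidual_le f hf).trans hQ.le)

theorem exists_closure_lowerCentralSeries_subset [CompactSpace K] {W : Set K} (hW : IsOpen W)
    (hres : (pronilpotentResidual K : Set K) ⊆ W) :
    ∃ n, closure ((⊤ : Subgroup K).lowerCentralSeries n : Set K) ⊆ W :=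
  exists_subset_nhds_of_isCompact'
    (Antitone.directed_ge fun _ _ hij => closure_mono (Subgroup.lowerCentralSeries_antitone _ hij))
    (fun _ => isClosed_closure.isCompact) (fun _ => isClosed_closure)
    fun _ hx => hW.mem_nhds (hres (mem_pronilpotentResidual_iff.2 (Set.mem_iInter.1 hx)))

end Residual

theorem Subgroup.commutator_top_le_of_subset_center_mul {G : Type*} [Group G]
    {H U : Subgroup G} [U.Normal] (hH : (H : Set G) ⊆ (center G : Set G) * U) :
    ⁅H, ⊤⁆ ≤ U := by
  rw [commutator_le]
  intro h hh g _
  obtain ⟨z, hz, u, hu, rfl⟩ := hH hh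
  have hzu : ⁅z * u, g⁆ = ⁅u, g⁆ := by
    have hcomm := mem_center_iff.1 hz (u * g * u⁻¹)
    calc ⁅z * u, g⁆ = z * (u * g * u⁻¹) * z⁻¹ * g⁻¹ := by group
      _ = ⁅u, g⁆ := by rw [← hcomm]; group
  rw [hzu]
  exact commutator_le_left U ⊤ (commutator_mem_commutator hu trivial)

theorem Subgroup.eq_bot_of_forall_le_openNormalSubgroup {K : Type*} [Group K]
    [TopologicalSpace K] [IsTopologicalGroup K] [CompactSpace K] [TotallyDisconnectedSpace K]
    {H : Subgroup K} (hH : ∀ U : OpenNormalSubgroup K, H ≤ U.toSubgroup) : H = ⊥ := by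
  refine (eq_bot_iff_forall H).2 fun x hx => by_contra fun hx1 => ?_
  obtain ⟨U, hU⟩ := ProfiniteGrp.exist_openNormalSubgroup_sub_open_nhds_of_one
    (isOpen_compl_singleton (x := x)) (Ne.symm hx1)
  exact hU (hH U hx) rfl

section Profinite

variable {K : Type*} [Group K] [TopologicalSpace K] [IsTopologicalGroup K] [CompactSpace K]

theorem pronilpotentResidual_le_of_le_center (hcent : pronilpotentResidual K ≤ Subgroup.center K)
    {U : Subgroup K} [U.Normal] (hU : IsOpen (U : Set K)) : pronilpotentResidual K ≤ U := by
  obtain ⟨m, hm⟩ := exists_closure_lowerCentralSeries_subset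
    (hU.mul_left (s := (pronilpotentResidual K : Set K)))
    fun x hx => ⟨x, hx, 1, U.one_mem, mul_one x⟩
  have hstep : (⊤ : Subgroup K).lowerCentralSeries (m + 1) ≤ U :=
    Subgroup.commutator_top_le_of_subset_center_mul
      (subset_closure.trans (hm.trans (Set.mul_subset_mul_right hcent)))
  exact fun x hx =>
    closure_minimal hstep (U.isClosed_of_isOpen hU) (mem_pronilpotentResidual_iff.1 hx (m + 1))

theorem isPronilpotent_of_pronilpotentResidual_le_center [TotallyDisconnectedSpace K]
    (hcent : pronilpotentResidual K ≤ Subgroup.center K) : IsPronilpotent K :=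
  Subgroup.eq_bot_of_forall_le_openNormalSubgroup fun U =>
    pronilpotentResidual_le_of_le_center hcent U.isOpen

end Profinite

theorem pronilpotent_by_finite_of_finite_by_pronilpotent_general
    {G : Type*} [Group G] [TopologicalSpace G] [IsTopologicalGroup G]
    [CompactSpace G] [TotallyDisconnectedSpace G]
    (N : Subgroup G) [hN : N.Normal] (hfin : Finite N)
    (hpn : IsPronilpotent (G ⧸ N)) :
    ∃ H : Subgroup G, IsOpen (H : Set G) ∧ H.Normal ∧ IsPronilpotent ↥H := by
  set C := Subgroup.centralizer (N : Set G)
  have hCopen : IsOpen (C : Set G) := N.isOpen_centralizer_of_finite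
  have : CompactSpace C :=
    isCompact_iff_compactSpace.1 (C.isClosed_of_isOpen hCopen).isCompact
  refine ⟨C, hCopen, inferInstance, isPronilpotent_of_pronilpotentResidual_le_center ?_⟩
  have hker := pronilpotentResidual_le_ker ((QuotientGroup.mk' N).comp C.subtype)
    (QuotientGroup.continuous_mk.comp continuous_subtype_val) hpn
  intro x hx
  have hxN : (x : G) ∈ N := by simpa using hker hx
  exact Subgroup.mem_center_iff.2 fun c =>
    Subtype.ext (Subgroup.mem_centralizer_iff.1 c.2 x hxN).symm

/-- A finite-by-pronilpotent profinite group is pronilpotent-by-finite: it has an open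
normal pronilpotent subgroup. -/
theorem pronilpotent_by_finite_of_finite_by_pronilpotent
    {G : Type*} [Group G] [TopologicalSpace G] [IsTopologicalGroup G]
    [CompactSpace G] [T2Space G] [TotallyDisconnectedSpace G]
    (N : Subgroup G) [hN : N.Normal] (hfin : Finite N)
    (hpn : IsPronilpotent (G ⧸ N)) :
    ∃ H : Subgroup G, IsOpen (H : Set G) ∧ H.Normal ∧ IsPronilpotent ↥H :=
  pronilpotent_by_finite_of_finite_by_pronilpotent_general N (hN := hN) hfin hpn
end

section
/- Let p be a prime and let G be a pro-p group such that G = AB, where A and B are two infinite procyclic closed normal subgroups of G. Then G is abelian. -/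
/-!  Basic notions for profinite groups.

A profinite group is modelled as a compact Hausdorff totally disconnected
topological group, via the instance assumptions
`[Group G] [TopologicalSpace G] [TopologicalGroup G] [CompactSpace G]
[T2Space G] [TotallyDisconnectedSpace G]`. -/

open scoped commutatorElement

/-!
Write `A = closure ⟨a⟩`, `B = closure ⟨b⟩`; by normality `c = ⁅a, b⁆ ∈ A ∩ B`, and since `A` is
abelian, `⁅a ^ n, b⁆ = c ^ n`. The closed subgroups of a procyclic pro-`p` group form a chain, as
they do in its finite cyclic `p`-group quotients; so if `c ≠ 1`, some `a ^ r` with `r > 0` lies in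
`closure ⟨c⟩ ≤ B` and commutes with `b`. Then `c ^ r = 1`, which makes `a` of finite order and `A`
finite. Hence `c = 1`, the generators of `A` and `B` commute, and `G = AB` is abelian.
-/
open Subgroup (zpowers mem_zpowers mem_zpowers_iff)

section CyclicSubgroups

variable {Q : Type*} [Group Q]

theorem pow_gcd_orderOf_mem_zpowers_pow (x : Q) (j : ℕ) :
    x ^ (orderOf x).gcd j ∈ zpowers (x ^ j) := by
  refine mem_zpowers_iff.mpr ⟨(orderOf x).gcdB j, ?_⟩
  rw [← zpow_natCast x ((orderOf x).gcd j), Nat.gcd_eq_gcd_ab, zpow_add, zpow_mul, zpow_mul,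
    zpow_natCast, zpow_natCast, pow_orderOf_eq_one, one_zpow, one_mul]

theorem mem_zpowers_of_orderOf_dvd {x u v : Q} (hx : IsOfFinOrder x) (hu : u ∈ zpowers x)
    (hv : v ∈ zpowers x) (h : orderOf u ∣ orderOf v) : u ∈ zpowers v := by
  obtain ⟨i, rfl⟩ := (Submonoid.mem_powers_iff _ _).mp (hx.mem_powers_iff_mem_zpowers.mpr hu)
  obtain ⟨j, rfl⟩ := (Submonoid.mem_powers_iff _ _).mp (hx.mem_powers_iff_mem_zpowers.mpr hv)
  set d := (orderOf x).gcd j with hd_def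
  obtain ⟨m, hm⟩ : d ∣ orderOf x := Nat.gcd_dvd_left _ _
  have hd : 0 < d := Nat.gcd_pos_of_pos_left _ hx.orderOf_pos
  have hm0 : 0 < m := Nat.pos_of_mul_pos_left (hm ▸ hx.orderOf_pos)
  have hdi : d ∣ i := by
    have h' : orderOf x ∣ i * orderOf (x ^ j) :=
      orderOf_dvd_of_pow_eq_one (by rw [pow_mul, orderOf_dvd_iff_pow_eq_one.mp h])
    rw [hx.orderOf_pow (n := j), ← hd_def, hm, Nat.mul_div_cancel_left _ hd] at h'
    exact Nat.dvd_of_mul_dvd_mul_right hm0 h'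
  obtain ⟨k, hk⟩ := hdi
  rw [hk, pow_mul]
  exact pow_mem (pow_gcd_orderOf_mem_zpowers_pow x j) k

theorem IsPGroup.mem_zpowers_or_mem_zpowers {p : ℕ} [Fact p.Prime] (hQ : IsPGroup p Q)
    {x u v : Q} (hu : u ∈ zpowers x) (hv : v ∈ zpowers x) : u ∈ zpowers v ∨ v ∈ zpowers u := by
  have hx : IsOfFinOrder x := by
    obtain ⟨k, hk⟩ := hQ x
    exact isOfFinOrder_iff_pow_eq_one.mpr ⟨p ^ k, pow_pos (Fact.out : p.Prime).pos k, hk⟩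
  obtain ⟨i, hi⟩ := hQ.exists_orderOf_eq_pow u
  obtain ⟨j, hj⟩ := hQ.exists_orderOf_eq_pow v
  rcases le_total i j with hij | hji
  · exact .inl (mem_zpowers_of_orderOf_dvd hx hu hv (hi ▸ hj ▸ pow_dvd_pow p hij))
  · exact .inr (mem_zpowers_of_orderOf_dvd hx hv hu (hi ▸ hj ▸ pow_dvd_pow p hji))

end CyclicSubgroups

theorem commutatorElement_pow_left_of_commute {G : Type*} [Group G] {a b : G}
    (h : Commute a ⁅a, b⁆) (n : ℕ) : ⁅a ^ n, b⁆ = ⁅a, b⁆ ^ n := by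
  induction n with
  | zero => simp
  | succ n ih =>
    calc ⁅a ^ (n + 1), b⁆ = a * ⁅a ^ n, b⁆ * a⁻¹ * ⁅a, b⁆ := by
          simp only [commutatorElement_def]; group
      _ = ⁅a, b⁆ ^ (n + 1) := by rw [ih, (h.pow_right n).eq, mul_inv_cancel_right, pow_succ]

section Profinite

variable {G : Type*} [Group G] [TopologicalSpace G] [IsTopologicalGroup G]

theorem QuotientGroup.mk_mem_zpowers_of_mem_closure (N : OpenNormalSubgroup G) {a c : G}
    (hc : c ∈ closure (zpowers a : Set G)) :
    (c : G ⧸ (N : Subgroup G)) ∈ zpowers (a : G ⧸ (N : Subgroup G)) := by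
  let K : Subgroup G := (zpowers (a : G ⧸ (N : Subgroup G))).comap (QuotientGroup.mk' N)
  have hK : IsClosed (K : Set G) :=
    K.isClosed_of_isOpen (Subgroup.isOpen_mono (fun g hg ↦ by
      simp [K, (QuotientGroup.eq_one_iff g).mpr hg]) N.isOpen)
  refine closure_minimal (fun g hg ↦ ?_) hK hc
  obtain ⟨n, rfl⟩ := mem_zpowers_iff.mp hg
  exact ⟨n, by simp⟩

theorem isPGroup_quotient_of_primesOf_subset [CompactSpace G] {p : ℕ} (hGp : primesOf G ⊆ {p})
    (N : OpenNormalSubgroup G) : IsPGroup p (G ⧸ (N : Subgroup G)) := by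
  have hN : (N : Subgroup G).index ≠ 0 := Subgroup.index_ne_zero_of_finite
  refine IsPGroup.of_card <|
    Subgroup.index_eq_card (H := N.toSubgroup) ▸ Nat.eq_prime_pow_of_unique_prime_dvd hN ?_
  exact fun hq hqN ↦ hGp ⟨hq, N, inferInstance, N.isOpen, hN, hqN⟩

theorem exists_openNormalSubgroup_notMem [CompactSpace G] [TotallyDisconnectedSpace G]
    [T1Space G] {c : G} (hc : c ≠ 1) : ∃ N : OpenNormalSubgroup G, c ∉ N := by
  obtain ⟨N, hN⟩ := ProfiniteGrp.exist_openNormalSubgroup_sub_open_nhds_of_one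
    isOpen_compl_singleton hc.symm
  exact ⟨N, fun h ↦ hN h rfl⟩

theorem mem_closure_of_forall_openNormalSubgroup [CompactSpace G] [TotallyDisconnectedSpace G]
    {S : Set G} {x : G} (h : ∀ N : OpenNormalSubgroup G, ∃ s ∈ S, x⁻¹ * s ∈ N) :
    x ∈ closure S := by
  refine mem_closure_iff.mpr fun U hU hxU ↦ ?_
  obtain ⟨N, hN⟩ := ProfiniteGrp.exist_openNormalSubgroup_sub_open_nhds_of_one
    (hU.preimage (continuous_const_mul x)) (by simpa using hxU)
  obtain ⟨s, hs, hxs⟩ := h N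
  exact ⟨s, by simpa using hN hxs, hs⟩

/- Take an open normal `M` missing `c` and `r = [G : M]`. Modulo any smaller open normal `K`, the
images of `⟨a ^ r⟩ ≤ M` and `⟨c⟩` are comparable subgroups of a cyclic `p`-group, and `⟨c⟩` cannot
be the smaller one since `c ∉ M`. -/
theorem exists_pow_mem_closure_zpowers [CompactSpace G] [TotallyDisconnectedSpace G] [T1Space G]
    {p : ℕ} (hp : p.Prime) (hGp : primesOf G ⊆ {p}) {a c : G}
    (hc : c ∈ closure (zpowers a : Set G)) (hc1 : c ≠ 1) :
    ∃ r, 0 < r ∧ a ^ r ∈ closure (zpowers c : Set G) := by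
  have := Fact.mk hp
  obtain ⟨M, hcM⟩ := exists_openNormalSubgroup_notMem hc1
  set r := (M : Subgroup G).index
  have haM : a ^ r ∈ M := Subgroup.pow_index_mem _ a
  refine ⟨r, Nat.pos_of_ne_zero Subgroup.index_ne_zero_of_finite,
    mem_closure_of_forall_openNormalSubgroup fun N ↦ ?_⟩
  set K := (N ⊓ M : OpenNormalSubgroup G)
  have har : ((a ^ r : G) : G ⧸ (K : Subgroup G)) ∈ zpowers (a : G ⧸ (K : Subgroup G)) :=
    ⟨r, by simp⟩
  rcases (isPGroup_quotient_of_primesOf_subset hGp K).mem_zpowers_or_mem_zpowers har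
    (QuotientGroup.mk_mem_zpowers_of_mem_closure K hc) with ⟨n, hn⟩ | ⟨n, hn⟩
  · exact ⟨c ^ n, ⟨n, rfl⟩, inf_le_left (b := M) (QuotientGroup.eq.mp (by simpa using hn.symm))⟩
  · refine absurd ?_ hcM
    have hcK : ((a ^ r) ^ n)⁻¹ * c ∈ M :=
      inf_le_right (a := N) (QuotientGroup.eq.mp (by simpa using hn))
    simpa using mul_mem (zpow_mem haM n) hcK

end Profinite

theorem IsOfFinOrder.closure_zpowers_eq {G : Type*} [Group G] [TopologicalSpace G] [T1Space G]
    {x : G} (hx : IsOfFinOrder x) : closure (zpowers x : Set G) = zpowers x :=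
  (finite_zpowers.mpr hx).isClosed.closure_eq

section Commutators

variable {G : Type*} [Group G] [TopologicalSpace G] [IsTopologicalGroup G] [T2Space G]

theorem Commute.of_mem_closure_zpowers {a b x y : G} (h : Commute a b)
    (hx : x ∈ closure (zpowers a : Set G)) (hy : y ∈ closure (zpowers b : Set G)) :
    Commute x y := by
  have key {g z : G} (hgz : Commute g z) {w : G} (hw : w ∈ closure (zpowers z : Set G)) :
      Commute g w := by
    have hsub : (zpowers z : Set G) ⊆ Set.centralizer {g} := by
      rintro _ ⟨m, rfl⟩
      simpa [Set.mem_centralizer_iff] using (hgz.zpow_right m).eq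
    exact Set.mem_centralizer_iff.mp (closure_minimal hsub (Set.isClosed_centralizer _) hw) g rfl
  exact (key (key h hy).symm hx).symm

theorem Commute.mul_mul_of_mem_closure_zpowers {a b x₁ x₂ y₁ y₂ : G} (h : Commute a b)
    (hx₁ : x₁ ∈ closure (zpowers a : Set G)) (hx₂ : x₂ ∈ closure (zpowers b : Set G))
    (hy₁ : y₁ ∈ closure (zpowers a : Set G)) (hy₂ : y₂ ∈ closure (zpowers b : Set G)) :
    Commute (x₁ * x₂) (y₁ * y₂) :=
  .mul_left (.mul_right ((Commute.refl a).of_mem_closure_zpowers hx₁ hy₁)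
      (h.of_mem_closure_zpowers hx₁ hy₂))
    (.mul_right (h.symm.of_mem_closure_zpowers hx₂ hy₁)
      ((Commute.refl b).of_mem_closure_zpowers hx₂ hy₂))

theorem commutatorElement_eq_one_of_mem_closure_zpowers [CompactSpace G]
    [TotallyDisconnectedSpace G] {p : ℕ} (hp : p.Prime) (hGp : primesOf G ⊆ {p})
    {a b : G} (ha : ¬IsOfFinOrder a) (hca : ⁅a, b⁆ ∈ closure (zpowers a : Set G))
    (hcb : Commute ⁅a, b⁆ b) : ⁅a, b⁆ = 1 := by
  by_contra hc
  obtain ⟨r, hr, har⟩ := exists_pow_mem_closure_zpowers hp hGp hca hc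
  have hcr : ⁅a, b⁆ ^ r = 1 := by
    rw [← commutatorElement_pow_left_of_commute
      ((Commute.refl a).of_mem_closure_zpowers (subset_closure (mem_zpowers a)) hca),
      commutatorElement_eq_one_iff_commute]
    exact hcb.of_mem_closure_zpowers har (subset_closure (mem_zpowers b))
  have hfin : IsOfFinOrder ⁅a, b⁆ := isOfFinOrder_iff_pow_eq_one.mpr ⟨r, hr, hcr⟩
  rw [hfin.closure_zpowers_eq] at har
  exact ha ((hfin.of_mem_zpowers har).of_pow hr.ne')

end Commutators

theorem comm_of_product_of_infinite_procyclic_normals_general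
    {G : Type*} [Group G] [TopologicalSpace G] [IsTopologicalGroup G]
    [CompactSpace G] [T2Space G] [TotallyDisconnectedSpace G]
    {p : ℕ} (hp : p.Prime) (hGp : primesOf G ⊆ {p})
    (A B : Subgroup G)
    (hAnormal : A.Normal) (hBnormal : B.Normal)
    (hAproc : IsProcyclicSubgroup A) (hBproc : IsProcyclicSubgroup B)
    (hAinf : Infinite A)
    (hprod : ∀ g : G, ∃ a ∈ A, ∃ b ∈ B, g = a * b) :
    ∀ x y : G, x * y = y * x := by
  obtain ⟨a, haA, hA⟩ := hAproc
  obtain ⟨b, hbB, hB⟩ := hBproc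
  have hA' : ∀ x ∈ A, x ∈ closure (zpowers a : Set G) := fun x hx ↦ hA ▸ hx
  have hB' : ∀ y ∈ B, y ∈ closure (zpowers b : Set G) := fun y hy ↦ hB ▸ hy
  have ha : ¬IsOfFinOrder a := fun h ↦ Set.infinite_coe_iff.mp hAinf <| by
    rw [← hA, h.closure_zpowers_eq]
    exact finite_zpowers.mpr h
  have hc : ⁅a, b⁆ ∈ A ⊓ B :=
    Subgroup.commutator_le_inf A B (Subgroup.commutator_mem_commutator haA hbB)
  have hab : Commute a b := commutatorElement_eq_one_iff_commute.mp <|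
    commutatorElement_eq_one_of_mem_closure_zpowers hp hGp ha (hA' _ hc.1)
      ((Commute.refl b).of_mem_closure_zpowers (hB' _ hc.2) (subset_closure (mem_zpowers b)))
  intro x y
  obtain ⟨x₁, hx₁, x₂, hx₂, rfl⟩ := hprod x
  obtain ⟨y₁, hy₁, y₂, hy₂, rfl⟩ := hprod y
  exact (hab.mul_mul_of_mem_closure_zpowers (hA' _ hx₁) (hB' _ hx₂) (hA' _ hy₁) (hB' _ hy₂)).eq

/-- Let `p` be a prime and `G` a pro-`p` group (a profinite group with `π(G) ⊆ {p}`) such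
that `G = AB`, where `A` and `B` are infinite procyclic closed normal subgroups. Then `G`
is abelian. -/
theorem comm_of_product_of_infinite_procyclic_normals
    {G : Type*} [Group G] [TopologicalSpace G] [IsTopologicalGroup G]
    [CompactSpace G] [T2Space G] [TotallyDisconnectedSpace G]
    {p : ℕ} (hp : p.Prime) (hGp : primesOf G ⊆ {p})
    (A B : Subgroup G)
    (hAnormal : A.Normal) (hBnormal : B.Normal)
    (hAclosed : IsClosed (A : Set G)) (hBclosed : IsClosed (B : Set G))
    (hAproc : IsProcyclicSubgroup A) (hBproc : IsProcyclicSubgroup B)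
    (hAinf : Infinite A) (hBinf : Infinite B)
    (hprod : ∀ g : G, ∃ a ∈ A, ∃ b ∈ B, g = a * b) :
    ∀ x y : G, x * y = y * x :=
  comm_of_product_of_infinite_procyclic_normals_general hp hGp A B hAnormal hBnormal hAproc hBproc
    hAinf hprod
end
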